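/- arXiv:1907.05478 — 2 statements merged into one kernel-verified Lean document; each statement's English description precedes it below -/
import Mathlib

section
/- Let P, Q ∈ ℝ^{n×n} be symmetric positive definite with Cholesky-type factorizations P = L_P L_Pᵀ and Q = L_Q L_Qᵀ, and let X Σ Yᵀ = L_Qᵀ L_P be a singular value decomposition (X, Y orthogonal, Σ diagonal with positive entries). Then S := Σ^{-1/2} Xᵀ L_Qᵀ is invertible with inverse S^{-1} = L_P Y Σ^{-1/2}, and S P Sᵀ = Σ = S^{-ᵀ} Q S^{-1}. -/
open Matrix

/-- Construction of the balancing transformation from Cholesky-type factors and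
an SVD of `L_Qᵀ L_P`. -/
theorem balancing_transformation_formula (n : ℕ)
    (P Q LP LQ X Y : Matrix (Fin n) (Fin n) ℝ) (d : Fin n → ℝ)
    (hP : P = LP * LPᵀ) (hQ : Q = LQ * LQᵀ)
    (hLP : IsUnit LP) (hLQ : IsUnit LQ)
    (hX : Xᵀ * X = 1) (hX' : X * Xᵀ = 1)
    (hY : Yᵀ * Y = 1) (hY' : Y * Yᵀ = 1)
    (hd : ∀ i, 0 < d i)
    (hSVD : X * Matrix.diagonal d * Yᵀ = LQᵀ * LP)
    (S Sinv : Matrix (Fin n) (Fin n) ℝ)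
    (hS : S = Matrix.diagonal (fun i => (Real.sqrt (d i))⁻¹) * Xᵀ * LQᵀ)
    (hSinv : Sinv = LP * Y * Matrix.diagonal (fun i => (Real.sqrt (d i))⁻¹)) :
    S * Sinv = 1 ∧ Sinv * S = 1 ∧
      S * P * Sᵀ = Matrix.diagonal d ∧
      Sinvᵀ * Q * Sinv = Matrix.diagonal d := by
  set e : Fin n → ℝ := fun i => (Real.sqrt (d i))⁻¹ with he
  have hs : ∀ i, Real.sqrt (d i) ≠ 0 := fun i => Real.sqrt_ne_zero'.2 (hd i)
  have hds : ∀ i, d i = Real.sqrt (d i) * Real.sqrt (d i) :=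
    fun i => (Real.mul_self_sqrt (hd i).le).symm
  have key1 : (fun i => e i * d i * e i) = fun _ => (1:ℝ) := by
    funext i
    have h0 := hs i
    simp only [he]
    rw [hds i]; field_simp; rw [Real.sqrt_sq (Real.sqrt_nonneg _)]
  have key2 : (fun i => e i * (d i * d i) * e i) = d := by
    funext i
    have h0 := hs i
    simp only [he]
    rw [hds i]; field_simp; rw [Real.sqrt_sq (Real.sqrt_nonneg _)]
  have hed : Matrix.diagonal e * Matrix.diagonal d * Matrix.diagonal e = 1 := by
    rw [Matrix.diagonal_mul_diagonal, Matrix.diagonal_mul_diagonal, key1, Matrix.diagonal_one]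
  have hedde : Matrix.diagonal e * (Matrix.diagonal d * Matrix.diagonal d) * Matrix.diagonal e
      = Matrix.diagonal d := by
    simp only [Matrix.diagonal_mul_diagonal]
    rw [key2]
  have hT : LPᵀ * LQ = Y * Matrix.diagonal d * Xᵀ := by
    have h := congrArg Matrix.transpose hSVD
    simpa [Matrix.transpose_mul, Matrix.diagonal_transpose, mul_assoc] using h.symm
  have h1 : S * Sinv = 1 := by
    rw [hS, hSinv]
    calc Matrix.diagonal e * Xᵀ * LQᵀ * (LP * Y * Matrix.diagonal e)
        = Matrix.diagonal e * Xᵀ * (LQᵀ * LP) * Y * Matrix.diagonal e := by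
          simp only [mul_assoc]
      _ = Matrix.diagonal e * Xᵀ * (X * Matrix.diagonal d * Yᵀ) * Y * Matrix.diagonal e := by
          rw [hSVD]
      _ = Matrix.diagonal e * (Xᵀ * X) * Matrix.diagonal d * (Yᵀ * Y) * Matrix.diagonal e := by
          simp only [mul_assoc]
      _ = 1 := by rw [hX, hY, mul_one, mul_one, hed]
  have h2 : Sinv * S = 1 := mul_eq_one_comm.mp h1
  refine ⟨h1, h2, ?_, ?_⟩
  · rw [hS, hP, Matrix.transpose_mul, Matrix.transpose_mul, Matrix.transpose_transpose,
      Matrix.transpose_transpose, Matrix.diagonal_transpose]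
    calc Matrix.diagonal e * Xᵀ * LQᵀ * (LP * LPᵀ) * (LQ * (X * Matrix.diagonal e))
        = Matrix.diagonal e * Xᵀ * (LQᵀ * LP) * ((LPᵀ * LQ) * X) * Matrix.diagonal e := by
          simp only [mul_assoc]
      _ = Matrix.diagonal e * Xᵀ * (X * Matrix.diagonal d * Yᵀ)
            * ((Y * Matrix.diagonal d * Xᵀ) * X) * Matrix.diagonal e := by rw [hSVD, hT]
      _ = Matrix.diagonal e * (Xᵀ * X) * Matrix.diagonal d * (Yᵀ * Y)
            * Matrix.diagonal d * (Xᵀ * X) * Matrix.diagonal e := by simp only [mul_assoc]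
      _ = Matrix.diagonal e * (Matrix.diagonal d * Matrix.diagonal d) * Matrix.diagonal e := by
          rw [hX, hY, mul_one, mul_one, mul_one]; simp only [mul_assoc]
      _ = Matrix.diagonal d := hedde
  · rw [hSinv, hQ, Matrix.transpose_mul, Matrix.transpose_mul, Matrix.diagonal_transpose]
    calc Matrix.diagonal e * (Yᵀ * LPᵀ) * (LQ * LQᵀ) * (LP * Y * Matrix.diagonal e)
        = Matrix.diagonal e * Yᵀ * (LPᵀ * LQ) * ((LQᵀ * LP) * Y) * Matrix.diagonal e := by
          simp only [mul_assoc]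
      _ = Matrix.diagonal e * Yᵀ * (Y * Matrix.diagonal d * Xᵀ)
            * ((X * Matrix.diagonal d * Yᵀ) * Y) * Matrix.diagonal e := by rw [hSVD, hT]
      _ = Matrix.diagonal e * (Yᵀ * Y) * Matrix.diagonal d * (Xᵀ * X)
            * Matrix.diagonal d * (Yᵀ * Y) * Matrix.diagonal e := by simp only [mul_assoc]
      _ = Matrix.diagonal e * (Matrix.diagonal d * Matrix.diagonal d) * Matrix.diagonal e := by
          rw [hX, hY, mul_one, mul_one, mul_one]; simp only [mul_assoc]
      _ = Matrix.diagonal d := hedde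
end

section
/- Let A ∈ ℝ^{n×n}, Σ ∈ ℝ^{n×n} symmetric positive definite, B ∈ ℝ^{n×m}, F ∈ ℝ^{n×m'} satisfy AΣ + ΣAᵀ = −BBᵀ + FFᵀ. Then for all x ∈ ℝⁿ and u ∈ ℝᵐ: xᵀ(AᵀΣ^{-1} + Σ^{-1}A)x + 4 xᵀΣ^{-1}Bu ≤ 4‖u‖₂² + ‖FᵀΣ^{-1}x‖₂². -/
open Matrix

private lemma dot_mulVec_flip {n m : ℕ} (M : Matrix (Fin n) (Fin m) ℝ)
    (x : Fin n → ℝ) (z : Fin m → ℝ) :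
    x ⬝ᵥ M.mulVec z = Mᵀ.mulVec x ⬝ᵥ z := by
  rw [Matrix.dotProduct_mulVec, Matrix.mulVec_transpose]

/-- Quadratic inequality obtained from the negative semidefinite Schur block matrix. -/
theorem quadratic_inequality_from_lyapunov (n m m' : ℕ)
    (A Sig : Matrix (Fin n) (Fin n) ℝ) (B : Matrix (Fin n) (Fin m) ℝ)
    (F : Matrix (Fin n) (Fin m') ℝ)
    (hSig : Sig.PosDef)
    (hLyap : A * Sig + Sig * Aᵀ = -(B * Bᵀ) + F * Fᵀ) :
    ∀ (x : Fin n → ℝ) (u : Fin m → ℝ),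
      x ⬝ᵥ (Aᵀ * Sig⁻¹ + Sig⁻¹ * A).mulVec x + 4 * (x ⬝ᵥ (Sig⁻¹ * B).mulVec u)
        ≤ 4 * (u ⬝ᵥ u) + (Fᵀ * Sig⁻¹).mulVec x ⬝ᵥ (Fᵀ * Sig⁻¹).mulVec x := by
  intro x u
  have hS : Sigᵀ = Sig := by
    have := hSig.isHermitian.eq
    simpa [Matrix.conjTranspose_eq_transpose_of_trivial] using this
  have hdet : IsUnit Sig.det := isUnit_iff_ne_zero.mpr hSig.det_pos.ne'
  have hinv : Sig * Sig⁻¹ = 1 := Matrix.mul_nonsing_inv _ hdet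
  have hSinv : Sig⁻¹ᵀ = Sig⁻¹ := by
    rw [Matrix.transpose_nonsing_inv, hS]
  set y := Sig⁻¹.mulVec x with hy
  have hx : Sig.mulVec y = x := by
    rw [hy, Matrix.mulVec_mulVec, hinv, Matrix.one_mulVec]
  set v := Bᵀ.mulVec y with hv
  set w := Fᵀ.mulVec y with hw
  have t1 : x ⬝ᵥ (Aᵀ * Sig⁻¹ + Sig⁻¹ * A).mulVec x = w ⬝ᵥ w - v ⬝ᵥ v := by
    have h1 : x ⬝ᵥ (Aᵀ * Sig⁻¹).mulVec x = y ⬝ᵥ (Sig * Aᵀ).mulVec y := by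
      calc x ⬝ᵥ (Aᵀ * Sig⁻¹).mulVec x = x ⬝ᵥ Aᵀ.mulVec y := by
            rw [← Matrix.mulVec_mulVec, hy]
        _ = A.mulVec x ⬝ᵥ y := by rw [dot_mulVec_flip, Matrix.transpose_transpose]
        _ = (A * Sig).mulVec y ⬝ᵥ y := by rw [← hx, Matrix.mulVec_mulVec]
        _ = y ⬝ᵥ (Sig * Aᵀ).mulVec y := by
            rw [dot_mulVec_flip (Sig * Aᵀ) y y, Matrix.transpose_mul,
              Matrix.transpose_transpose, hS]
    have h2 : x ⬝ᵥ (Sig⁻¹ * A).mulVec x = y ⬝ᵥ (A * Sig).mulVec y := by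
      rw [← Matrix.mulVec_mulVec, dot_mulVec_flip, hSinv, ← hy, ← hx,
        Matrix.mulVec_mulVec, Matrix.mulVec_mulVec]
    have h3 : y ⬝ᵥ (A * Sig + Sig * Aᵀ).mulVec y = w ⬝ᵥ w - v ⬝ᵥ v := by
      rw [hLyap, Matrix.add_mulVec, dotProduct_add, Matrix.neg_mulVec,
        dotProduct_neg, ← Matrix.mulVec_mulVec, ← Matrix.mulVec_mulVec,
        dot_mulVec_flip B, dot_mulVec_flip F, ← hv, ← hw]
      ring
    rw [Matrix.add_mulVec, dotProduct_add, h1, h2, ← h3,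
      Matrix.add_mulVec, dotProduct_add]
    ring
  have t2 : x ⬝ᵥ (Sig⁻¹ * B).mulVec u = v ⬝ᵥ u := by
    rw [← Matrix.mulVec_mulVec, dot_mulVec_flip, hSinv, ← hy, dot_mulVec_flip, ← hv]
  have t3 : (Fᵀ * Sig⁻¹).mulVec x = w := by
    rw [← Matrix.mulVec_mulVec, ← hy, ← hw]
  have key : (0:ℝ) ≤ (v - (2:ℝ) • u) ⬝ᵥ (v - (2:ℝ) • u) := by
    unfold dotProduct
    exact Finset.sum_nonneg fun i _ => mul_self_nonneg _
  rw [t1, t2, t3]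
  have hexp : (v - (2:ℝ) • u) ⬝ᵥ (v - (2:ℝ) • u)
      = v ⬝ᵥ v - 4 * (v ⬝ᵥ u) + 4 * (u ⬝ᵥ u) := by
    simp [sub_dotProduct, dotProduct_sub, smul_dotProduct,
      dotProduct_smul, dotProduct_comm u v, smul_eq_mul]
    ring
  nlinarith [key, hexp]
end
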